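/- Let G be a finite group, R a commutative ring, and F a family of subgroups of G closed under conjugation and under taking subgroups. An RG-module M is F-projective if and only if M is a direct summand of an RG-module of the form N ⊗_R RX, where N is some RG-module and X is a G-set all of whose isotropy subgroups belong to F. -/

import Mathlib

/-!
A surjection `p : B ⟶ C` is `H`-split exactly when `H` fixes a point of the `G`-set of
`R`-linear sections of `p`, on which `G` acts by conjugation `s ↦ ρ_B g ∘ s ∘ ρ_C g⁻¹`.

If all stabilizers of `X` lie in `F` and `p` is `F`-split, then every stabilizer `G_x` fixes
some section; transporting such a choice along each orbit gives a `G`-map `x ↦ s_x`, and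
`n ⊗ x ↦ s_x (γ (n ⊗ x))` lifts any `γ : N ⊗ RX ⟶ C` through `p`. Lifting properties pass to
retracts. Conversely, for `X = ⊔_{H ∈ F} G/H` the augmentation `M ⊗ RX ⟶ M`, `m ⊗ x ↦ m`, is
`F`-split (`m ↦ m ⊗ H` is an `RH`-linear section), so an `F`-projective `M` is a retract of
`M ⊗ RX`.
-/

open CategoryTheory MonoidalCategory

/-- A surjection `π : B → C` of `RG`-modules (`R`-linear `G`-representations) is
`H`-split if, after restriction to `H`, the corresponding short exact sequence splits,
i.e. `π` admits an `RH`-linear section: an `R`-linear section commuting with the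
action of every `h ∈ H`. -/
def IsHSplitSurj (R : Type) [CommRing R] (G : Type) [Group G] (H : Subgroup G)
    {B C : Rep.{0} R G} (π : B ⟶ C) : Prop :=
  ∃ s : C.V →ₗ[R] B.V, (∀ c, π.hom (s c) = c) ∧
    ∀ h ∈ H, ∀ c, s (C.ρ h c) = B.ρ h (s c)

/-- The short exact sequence `0 → ker f → P → im f → 0` of `RG`-modules is `H`-split:
the surjection of `P` onto the image of `f` admits an `RH`-linear section. -/
def IsHSplitOntoRange (R : Type) [CommRing R] (G : Type) [Group G] (H : Subgroup G)
    {P Q : Rep.{0} R G} (f : P ⟶ Q) : Prop :=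
  ∃ s : LinearMap.range f.hom.toLinearMap →ₗ[R] P.V,
    (∀ y : LinearMap.range f.hom.toLinearMap, f.hom (s y) = y) ∧
    ∀ h ∈ H, ∀ y : LinearMap.range f.hom.toLinearMap,
      s ⟨Q.ρ h y.1, by
        obtain ⟨x, hx⟩ := y.2
        exact ⟨P.ρ h x, by rw [← hx]; exact Rep.hom_comm_apply f h x⟩⟩ = P.ρ h (s y)

/-- An `RG`-module `P` is `F`-projective if for every `F`-split short exact sequence
`0 → A → B → C → 0` of `RG`-modules, every map `P → C` lifts to a map `P → B`. -/
def IsFProjective (R : Type) [CommRing R] (G : Type) [Group G] (F : Set (Subgroup G))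
    (P : Rep.{0} R G) : Prop :=
  ∀ (A B C : Rep.{0} R G) (i : A ⟶ B) (p : B ⟶ C),
    Function.Injective i.hom → Function.Surjective p.hom →
    LinearMap.range i.hom.toLinearMap = LinearMap.ker p.hom.toLinearMap →
    (∀ H ∈ F, IsHSplitSurj R G H p) →
    ∀ α : P ⟶ C, ∃ β : P ⟶ B, β ≫ p = α

namespace MulAction

variable {G : Type*} [Group G]

theorem nonempty_mulActionHom_of_forall_exists_stabilizer_le {X Y : Type*} [MulAction G X]
    [MulAction G Y] (h : ∀ x : X, ∃ y : Y, stabilizer G x ≤ stabilizer G y) :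
    Nonempty (X →[G] Y) := by
  choose y hy using fun q : orbitRel.Quotient G X => h q.out
  choose g hg using fun x : X => mem_orbit_iff.1 <|
    orbitRel.Quotient.mem_orbit.2 (Quotient.out_eq (⟦x⟧ : orbitRel.Quotient G X)).symm
  refine ⟨⟨fun x => g x • y ⟦x⟧, fun k x => ?_⟩⟩
  have hq : (⟦k • x⟧ : orbitRel.Quotient G X) = ⟦x⟧ := Quotient.sound (mem_orbit x k)
  have hkx : g (k • x) • (⟦x⟧ : orbitRel.Quotient G X).out = k • x := hq ▸ hg (k • x)
  have hfix : (k * g x)⁻¹ * g (k • x) ∈ stabilizer G (⟦x⟧ : orbitRel.Quotient G X).out := by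
    rw [mem_stabilizer_iff, mul_smul, hkx, mul_inv_rev, mul_smul, inv_smul_smul, inv_smul_eq_iff,
      hg]
  change g (k • x) • y ⟦k • x⟧ = k • g x • y ⟦x⟧
  rw [hq, ← mul_inv_cancel_left (k * g x) (g (k • x)), mul_smul, hy _ hfix, mul_smul]

theorem stabilizer_sigma_mk {ι : Type*} {α : ι → Type*} [∀ i, MulAction G (α i)] (i : ι)
    (a : α i) : stabilizer G (⟨i, a⟩ : Σ i, α i) = stabilizer G a := by
  ext g
  simp [mem_stabilizer_iff]

theorem stabilizer_quotient_mem {F : Set (Subgroup G)}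
    (hconj : ∀ H ∈ F, ∀ g : G, Subgroup.map (MulAut.conj g).toMonoidHom H ∈ F) {H : Subgroup G}
    (hH : H ∈ F) (q : G ⧸ H) : stabilizer G q ∈ F := by
  induction q using QuotientGroup.induction_on with
  | H g =>
    rw [← mul_one g, ← smul_eq_mul, ← Quotient.smul_coe, stabilizer_smul_eq_stabilizer_map_conj,
      stabilizer_quotient]
    exact hconj H hH g

end MulAction

namespace Rep

universe u v

variable {k : Type u} [CommRing k] {G : Type v} [Group G]

section TensorOfMulAction

variable {N B : Rep k G} {X : Type u} [MulAction G X]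

theorem tensor_ofMulAction_ρ_tmul_single (g : G) (n : N) (x : X) (r : k) :
    (N ⊗ ofMulAction k G X).ρ g (n ⊗ₜ MonoidAlgebra.single x r) =
      N.ρ g n ⊗ₜ MonoidAlgebra.single (g • x) r := by
  simp [Representation.tprod_apply, Representation.ofMulAction_single]

theorem tensor_ofMulAction_hom_ext {f f' : N ⊗ ofMulAction k G X ⟶ B}
    (h : ∀ n x, f.hom (n ⊗ₜ MonoidAlgebra.single x 1) = f'.hom (n ⊗ₜ MonoidAlgebra.single x 1)) :
    f = f' := by
  ext : 2
  refine TensorProduct.ext (LinearMap.ext fun n => MonoidAlgebra.lhom_ext' fun x => ?_)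
  ext
  exact h n x

noncomputable def tensorOfMulActionLift (Ψ : X → N.V →ₗ[k] B.V)
    (hΨ : ∀ g x n, Ψ (g • x) (N.ρ g n) = B.ρ g (Ψ x n)) : N ⊗ ofMulAction k G X ⟶ B :=
  ofHom <| LinearMap.intertwiningMap_of_isIntertwiningMap _ _
    (TensorProduct.lift (Finsupp.linearCombination k Ψ ∘ₗ
      (MonoidAlgebra.coeffLinearEquiv k).toLinearMap).flip) fun g t => by
    induction t using TensorProduct.induction_on with
    | zero => simp
    | tmul n a =>
      induction a using MonoidAlgebra.induction_linear with
      | zero => simp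
      | add a b ha hb => simp_all [TensorProduct.tmul_add]
      | single x r => simp [hΨ]
    | add s t hs ht => simp_all

theorem tensorOfMulActionLift_tmul_single (Ψ : X → N.V →ₗ[k] B.V)
    (hΨ : ∀ g x n, Ψ (g • x) (N.ρ g n) = B.ρ g (Ψ x n)) (n : N) (x : X) (r : k) :
    (tensorOfMulActionLift Ψ hΨ).hom (n ⊗ₜ MonoidAlgebra.single x r) = r • Ψ x n := by
  simp [tensorOfMulActionLift]

variable (N X)

noncomputable def augmentation : N ⊗ ofMulAction k G X ⟶ N :=
  tensorOfMulActionLift (fun _ => LinearMap.id) fun _ _ _ => rfl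

theorem augmentation_tmul_single (n : N) (x : X) (r : k) :
    (augmentation N X).hom (n ⊗ₜ MonoidAlgebra.single x r) = r • n :=
  tensorOfMulActionLift_tmul_single _ _ n x r

theorem augmentation_surjective [Nonempty X] : Function.Surjective (augmentation N X).hom :=
  fun n => ⟨n ⊗ₜ MonoidAlgebra.single (Classical.arbitrary X) 1, by
    rw [augmentation_tmul_single, one_smul]⟩

end TensorOfMulAction

section LinearSections

variable {B C : Rep k G}

abbrev LinearSections (p : B ⟶ C) : Type u := {s : C.V →ₗ[k] B.V // ∀ c, p.hom (s c) = c}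

instance (p : B ⟶ C) : SMul G (LinearSections p) where
  smul g s := ⟨B.ρ g ∘ₗ s.1 ∘ₗ C.ρ g⁻¹, fun c => by simp [hom_comm_apply, s.2]⟩

@[simp]
theorem LinearSections.smul_apply {p : B ⟶ C} (g : G) (s : LinearSections p) (c : C) :
    (g • s).1 c = B.ρ g (s.1 (C.ρ g⁻¹ c)) :=
  rfl

instance (p : B ⟶ C) : MulAction G (LinearSections p) where
  one_smul s := Subtype.ext <| LinearMap.ext fun c => by simp
  mul_smul g h s := Subtype.ext <| LinearMap.ext fun c => by simp [map_mul]

theorem LinearSections.mem_stabilizer_iff {p : B ⟶ C} {s : LinearSections p} {g : G} :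
    g ∈ MulAction.stabilizer G s ↔ ∀ c, s.1 (C.ρ g c) = B.ρ g (s.1 c) := by
  rw [MulAction.mem_stabilizer_iff, Subtype.ext_iff, LinearMap.ext_iff]
  refine ⟨fun h c => ?_, fun h c => ?_⟩
  · simpa using (h (C.ρ g c)).symm
  · simp [← h]

theorem exists_lift_of_mulActionHom_linearSections {X : Type u} [MulAction G X] {N : Rep k G}
    {p : B ⟶ C} (T : X →[G] LinearSections p) (γ : N ⊗ ofMulAction k G X ⟶ C) :
    ∃ β : N ⊗ ofMulAction k G X ⟶ B, β ≫ p = γ := by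
  let Ψ x := (T x).1 ∘ₗ γ.hom.toLinearMap ∘ₗ
    (TensorProduct.mk k N.V (ofMulAction k G X).V).flip (MonoidAlgebra.single x 1)
  have hΨ : ∀ g x n, Ψ (g • x) (N.ρ g n) = B.ρ g (Ψ x n) := by
    intro g x n
    have hγ := hom_comm_apply γ g (n ⊗ₜ MonoidAlgebra.single x 1)
    rw [tensor_ofMulAction_ρ_tmul_single] at hγ
    simp [Ψ, map_smul, hγ]
  refine ⟨tensorOfMulActionLift Ψ hΨ, tensor_ofMulAction_hom_ext fun n x => ?_⟩
  rw [hom_comp, Representation.IntertwiningMap.comp_apply, tensorOfMulActionLift_tmul_single,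
    one_smul]
  exact (T x).2 _

end LinearSections

end Rep

section FProjective

variable {R : Type} [CommRing R] {G : Type} [Group G] {F : Set (Subgroup G)}

theorem IsHSplitSurj.exists_le_stabilizer {H : Subgroup G} {B C : Rep R G} {p : B ⟶ C}
    (h : IsHSplitSurj R G H p) : ∃ s : Rep.LinearSections p, H ≤ MulAction.stabilizer G s := by
  obtain ⟨s, hs, hH⟩ := h
  exact ⟨⟨s, hs⟩, fun g hg => Rep.LinearSections.mem_stabilizer_iff.2 (hH g hg)⟩

theorem isHSplitSurj_augmentation (M : Rep R G) {X : Type} [MulAction G X] {H : Subgroup G}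
    (x : X) (hx : H ≤ MulAction.stabilizer G x) : IsHSplitSurj R G H (Rep.augmentation M X) := by
  refine ⟨(TensorProduct.mk R M.V (Rep.ofMulAction R G X).V).flip (MonoidAlgebra.single x 1),
    fun m => ?_, fun h hh m => ?_⟩
  · simp only [LinearMap.flip_apply, TensorProduct.mk_apply]
    rw [Rep.augmentation_tmul_single, one_smul]
  · simp [MulAction.mem_stabilizer_iff.1 (hx hh)]

theorem isFProjective_tensor_ofMulAction (N : Rep R G) (X : Type) [MulAction G X]
    (hX : ∀ x : X, MulAction.stabilizer G x ∈ F) :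
    IsFProjective R G F (N ⊗ Rep.ofMulAction R G X) := by
  intro A B C i p _ _ _ hsplit γ
  obtain ⟨T⟩ := MulAction.nonempty_mulActionHom_of_forall_exists_stabilizer_le
    fun x => (hsplit _ (hX x)).exists_le_stabilizer
  exact Rep.exists_lift_of_mulActionHom_linearSections T γ

theorem IsFProjective.of_retract {M P : Rep R G} (hP : IsFProjective R G F P) (h : Retract M P) :
    IsFProjective R G F M := by
  intro A B C i p hi hp hip hsplit α
  obtain ⟨β, hβ⟩ := hP A B C i p hi hp hip hsplit (h.r ≫ α)
  exact ⟨h.i ≫ β, by rw [Category.assoc, hβ, h.retract_assoc]⟩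

theorem IsFProjective.exists_section {M B : Rep R G} (hM : IsFProjective R G F M) {p : B ⟶ M}
    (hp : Function.Surjective p.hom) (hsplit : ∀ H ∈ F, IsHSplitSurj R G H p) :
    ∃ s : M ⟶ B, s ≫ p = 𝟙 M :=
  hM _ B M (Rep.subtype B (LinearMap.ker p.hom.toLinearMap) fun g b hb => by
      simp_all [Rep.hom_comm_apply]) p Subtype.val_injective hp (Submodule.range_subtype _)
    hsplit (𝟙 M)

end FProjective

theorem fProjective_iff_directSummand_general
    (G : Type) [Group G] (R : Type) [CommRing R]
    (F : Set (Subgroup G))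
    (hconj : ∀ H ∈ F, ∀ g : G, Subgroup.map (MulAut.conj g).toMonoidHom H ∈ F)
    (hbot : ⊥ ∈ F)
    (M : Rep R G) :
    IsFProjective R G F M ↔
      ∃ (N : Rep R G) (X : Type) (inst : MulAction G X),
        (∀ x : X, @MulAction.stabilizer G X _ inst x ∈ F) ∧
        ∃ (ι : M ⟶ N ⊗ @Rep.ofMulAction R G _ _ X inst)
          (π : N ⊗ @Rep.ofMulAction R G _ _ X inst ⟶ M), ι ≫ π = 𝟙 M := by
  let X := Σ H : F, G ⧸ (H : Subgroup G)
  have : Nonempty X := ⟨⟨⟨⊥, hbot⟩, (1 : G)⟩⟩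
  constructor
  · intro hM
    obtain ⟨s, hs⟩ := hM.exists_section (Rep.augmentation_surjective M X) fun H hH =>
      isHSplitSurj_augmentation M (⟨⟨H, hH⟩, (1 : G)⟩ : X)
        (by rw [MulAction.stabilizer_sigma_mk, MulAction.stabilizer_quotient])
    refine ⟨M, X, inferInstance, fun ⟨⟨H, hH⟩, q⟩ => ?_, s, Rep.augmentation M X, hs⟩
    rw [MulAction.stabilizer_sigma_mk]
    exact MulAction.stabilizer_quotient_mem hconj hH q
  · rintro ⟨N, X, _, hX, ι, π, h⟩
    exact (isFProjective_tensor_ofMulAction N X hX).of_retract ⟨ι, π, h⟩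

/-- Let `G` be a finite group, `R` a commutative ring, and `F` a family
of subgroups of `G` closed under conjugation and under taking subgroups (in particular
containing the trivial subgroup).  An `RG`-module `M` is `F`-projective if and only if
`M` is a direct summand of an `RG`-module of the form `N ⊗ RX`, where `N` is some
`RG`-module and `X` is a `G`-set all of whose isotropy subgroups belong to `F`. -/
theorem fProjective_iff_directSummand
    (G : Type) [Group G] [Finite G] (R : Type) [CommRing R]
    (F : Set (Subgroup G))
    (hconj : ∀ H ∈ F, ∀ g : G, Subgroup.map (MulAut.conj g).toMonoidHom H ∈ F)
    (hsub : ∀ H ∈ F, ∀ K : Subgroup G, K ≤ H → K ∈ F)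
    (hbot : ⊥ ∈ F)
    (M : Rep R G) :
    IsFProjective R G F M ↔
      ∃ (N : Rep R G) (X : Type) (inst : MulAction G X),
        (∀ x : X, @MulAction.stabilizer G X _ inst x ∈ F) ∧
        ∃ (ι : M ⟶ N ⊗ @Rep.ofMulAction R G _ _ X inst)
          (π : N ⊗ @Rep.ofMulAction R G _ _ X inst ⟶ M), ι ≫ π = 𝟙 M :=
  fProjective_iff_directSummand_general G R F hconj hbot M
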